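/- (Proposition 3.1) Let I ⊆ ℝ be an open interval, let γ : I → ℝ be a function, let δ be a nonzero real constant, and let x, y, z : ℝ → ℝ be three times differentiable functions each of which satisfies u'''(t) + γ(t)·u'(t) + δ·u(t) = 0 for all t ∈ I, with W(x,y,z)(t) ≠ 0 for all t ∈ I. Fix t₀ ∈ I and set α = -δ / W(x,y,z)(t₀). Then the triple (x, y, z) satisfies the Tzitzeica curve equation: W(x',y',z')(t) = α · (W(x,y,z)(t))² for all t ∈ I. -/

import Mathlib

/-!
Differentiating the Wronskian row by row, only the variation of the last row survives, and along
solutions of `u''' = -γ u' - δ u` that row is a combination of the first two; so `W(x,y,z)` is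
constant on the interval. For the same reason the rows `(u', u'', u''')` of `W(x',y',z')` reduce
to `(u', u'', -δ u)`, a cyclic permutation of the rows of `-δ W(x,y,z)`. Hence
`W(x',y',z')(t) = -δ W(t₀) = α W(t)²`.
-/

/-- The Wronskian of three functions `x, y, z : ℝ → ℝ`. -/
noncomputable def W3 (x y z : ℝ → ℝ) (t : ℝ) : ℝ :=
  Matrix.det !![x t, y t, z t;
    deriv x t, deriv y t, deriv z t;
    deriv (deriv x) t, deriv (deriv y) t, deriv (deriv z) t]

/-- A function `f : ℝ → ℝ` is three times differentiable. -/
def ThriceDiff (f : ℝ → ℝ) : Prop :=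
  Differentiable ℝ f ∧ Differentiable ℝ (deriv f) ∧ Differentiable ℝ (deriv (deriv f))

theorem Matrix.det_fin_three_of {R : Type*} [CommRing R] (a b c d e f g h i : R) :
    Matrix.det !![a, b, c; d, e, f; g, h, i] =
      a * e * i - a * f * h - b * d * i + b * f * g + c * d * h - c * e * g :=
  Matrix.det_fin_three _

lemma HasDerivAt.mul₃ {f g h : ℝ → ℝ} {f' g' h' t : ℝ}
    (hf : HasDerivAt f f' t) (hg : HasDerivAt g g' t) (hh : HasDerivAt h h' t) :
    HasDerivAt (fun s => f s * g s * h s) ((f' * g t + f t * g') * h t + f t * g t * h') t :=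
  (hf.mul hg).mul hh

theorem hasDerivAt_W3 {x y z : ℝ → ℝ} (hx : ThriceDiff x) (hy : ThriceDiff y)
    (hz : ThriceDiff z) (t : ℝ) :
    HasDerivAt (W3 x y z)
      (Matrix.det !![x t, y t, z t;
        deriv x t, deriv y t, deriv z t;
        deriv (deriv (deriv x)) t, deriv (deriv (deriv y)) t, deriv (deriv (deriv z)) t]) t := by
  obtain ⟨hx₀, hx₁, hx₂⟩ := hx
  obtain ⟨hy₀, hy₁, hy₂⟩ := hy
  obtain ⟨hz₀, hz₁, hz₂⟩ := hz
  have X₀ := (hx₀ t).hasDerivAt; have X₁ := (hx₁ t).hasDerivAt; have X₂ := (hx₂ t).hasDerivAt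
  have Y₀ := (hy₀ t).hasDerivAt; have Y₁ := (hy₁ t).hasDerivAt; have Y₂ := (hy₂ t).hasDerivAt
  have Z₀ := (hz₀ t).hasDerivAt; have Z₁ := (hz₁ t).hasDerivAt; have Z₂ := (hz₂ t).hasDerivAt
  unfold W3
  simp only [Matrix.det_fin_three_of]
  refine (((((X₀.mul₃ Y₁ Z₂).sub (X₀.mul₃ Z₁ Y₂)).sub (Y₀.mul₃ X₁ Z₂)).add
    (Y₀.mul₃ Z₁ X₂)).add (Z₀.mul₃ X₁ Y₂) |>.sub (Z₀.mul₃ Y₁ X₂)).congr_deriv ?_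
  ring

lemma third_deriv_eq_of_ode {γ : ℝ → ℝ} {δ t : ℝ} {u : ℝ → ℝ}
    (hu : deriv (deriv (deriv u)) t + γ t * deriv u t + δ * u t = 0) :
    deriv (deriv (deriv u)) t = -γ t * deriv u t - δ * u t := by
  linear_combination hu

section

variable {γ : ℝ → ℝ} {δ t : ℝ} {x y z : ℝ → ℝ}
  (hx : deriv (deriv (deriv x)) t + γ t * deriv x t + δ * x t = 0)
  (hy : deriv (deriv (deriv y)) t + γ t * deriv y t + δ * y t = 0)
  (hz : deriv (deriv (deriv z)) t + γ t * deriv z t + δ * z t = 0)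

include hx hy hz

lemma det_third_deriv_eq_zero_of_ode :
    Matrix.det !![x t, y t, z t;
      deriv x t, deriv y t, deriv z t;
      deriv (deriv (deriv x)) t, deriv (deriv (deriv y)) t, deriv (deriv (deriv z)) t] = 0 := by
  rw [Matrix.det_fin_three_of, third_deriv_eq_of_ode hx, third_deriv_eq_of_ode hy,
    third_deriv_eq_of_ode hz]
  ring

lemma W3_deriv_eq_of_ode : W3 (deriv x) (deriv y) (deriv z) t = -δ * W3 x y z t := by
  rw [W3, W3, Matrix.det_fin_three_of, Matrix.det_fin_three_of, third_deriv_eq_of_ode hx,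
    third_deriv_eq_of_ode hy, third_deriv_eq_of_ode hz]
  ring

end

theorem Convex.is_const_of_hasDerivAt_eq_zero {G : Type*} [NormedAddCommGroup G]
    [NormedSpace ℝ G] {f : ℝ → G} {s : Set ℝ} (hs : Convex ℝ s)
    (hf : ∀ t ∈ s, HasDerivAt f 0 t) {a b : ℝ} (ha : a ∈ s) (hb : b ∈ s) : f a = f b := by
  have := hs.norm_image_sub_le_of_norm_hasDerivWithin_le (f' := 0) (C := 0)
    (fun t ht => (hf t ht).hasDerivWithinAt) (fun _ _ => by simp) hb ha
  simpa [sub_eq_zero] using this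

theorem stmt_6_general (I : Set ℝ) (hIinterval : I.OrdConnected)
    (γ : ℝ → ℝ) (δ : ℝ) (x y z : ℝ → ℝ)
    (hx : ThriceDiff x) (hy : ThriceDiff y) (hz : ThriceDiff z)
    (hxode : ∀ t ∈ I, deriv (deriv (deriv x)) t + γ t * deriv x t + δ * x t = 0)
    (hyode : ∀ t ∈ I, deriv (deriv (deriv y)) t + γ t * deriv y t + δ * y t = 0)
    (hzode : ∀ t ∈ I, deriv (deriv (deriv z)) t + γ t * deriv z t + δ * z t = 0)
    (t₀ : ℝ) (ht₀ : t₀ ∈ I) (α : ℝ) (hα : α = -δ / W3 x y z t₀) :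
    ∀ t ∈ I, W3 (deriv x) (deriv y) (deriv z) t = α * (W3 x y z t) ^ 2 := by
  intro t ht
  have hW_const : W3 x y z t = W3 x y z t₀ :=
    hIinterval.convex.is_const_of_hasDerivAt_eq_zero (fun s hs =>
      (hasDerivAt_W3 hx hy hz s).congr_deriv
        (det_third_deriv_eq_zero_of_ode (hxode s hs) (hyode s hs) (hzode s hs))) ht ht₀
  -- the identity `-δ / c * c ^ 2 = -δ * c` also holds for `c = 0`, as `-δ / 0 = 0`
  rw [W3_deriv_eq_of_ode (hxode t ht) (hyode t ht) (hzode t ht), hα, hW_const, sq,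
    div_mul_eq_mul_div, mul_div_assoc, mul_self_div_self]

theorem stmt_6 (I : Set ℝ) (hIopen : IsOpen I) (hIinterval : I.OrdConnected)
    (γ : ℝ → ℝ) (δ : ℝ) (hδ : δ ≠ 0) (x y z : ℝ → ℝ)
    (hx : ThriceDiff x) (hy : ThriceDiff y) (hz : ThriceDiff z)
    (hxode : ∀ t ∈ I, deriv (deriv (deriv x)) t + γ t * deriv x t + δ * x t = 0)
    (hyode : ∀ t ∈ I, deriv (deriv (deriv y)) t + γ t * deriv y t + δ * y t = 0)
    (hzode : ∀ t ∈ I, deriv (deriv (deriv z)) t + γ t * deriv z t + δ * z t = 0)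
    (hne : ∀ t ∈ I, W3 x y z t ≠ 0)
    (t₀ : ℝ) (ht₀ : t₀ ∈ I) (α : ℝ) (hα : α = -δ / W3 x y z t₀) :
    ∀ t ∈ I, W3 (deriv x) (deriv y) (deriv z) t = α * (W3 x y z t) ^ 2 :=
  stmt_6_general I hIinterval γ δ x y z hx hy hz hxode hyode hzode t₀ ht₀ α hα
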